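/- Let f, g: Ω ⊂ ℝ² → ℝ be smooth with Ω open, and let Σ be the graph surface (x,y) ↦ (x, y, f(x,y), g(x,y)) with first fundamental form coefficients E = 1 + f_x² + g_x², F = f_x f_y + g_x g_y, G = 1 + f_y² + g_y². Then the symmetric operator S_{Π W} measuring the principal angles of the tangent plane W with respect to the plane Π = ℝ²×{0} has matrix, in the basis (∂_x, ∂_y), equal to the inverse of the metric matrix ((E,F),(F,G)). Consequently, Σ has constant principal angles with respect to Π if and only if the matrix ((E,F),(F,G)) has constant eigenvalues. -/

import Mathlib

noncomputable section
open Real Polynomial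
open scoped RealInnerProductSpace

abbrev E4 := EuclideanSpace ℝ (Fin 4)

/-- `θ₁ ≤ θ₂` are the principal angles between the planes `V` and `W` of `ℝ⁴`:
`cos²θ₁`, `cos²θ₂` are the eigenvalues of the quadratic form `v ↦ ‖p_W v‖²` on `V`. -/
def IsPrincipalAngles (V W : Submodule ℝ E4) (θ₁ θ₂ : ℝ) : Prop :=
  0 ≤ θ₁ ∧ θ₁ ≤ θ₂ ∧ θ₂ ≤ π / 2 ∧
  ∃ v₁ v₂ : E4, v₁ ∈ V ∧ v₂ ∈ V ∧ ‖v₁‖ = 1 ∧ ‖v₂‖ = 1 ∧ ⟪v₁, v₂⟫ = 0 ∧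
    ∀ v ∈ V, ‖(Submodule.orthogonalProjection W v : E4)‖ ^ 2 =
      Real.cos θ₁ ^ 2 * ⟪v, v₁⟫ ^ 2 + Real.cos θ₂ ^ 2 * ⟪v, v₂⟫ ^ 2

/-- partial derivatives of a function `ℝ² → ℝ` -/
def px (f : ℝ × ℝ → ℝ) (p : ℝ × ℝ) : ℝ := fderiv ℝ f p (1, 0)
def py (f : ℝ × ℝ → ℝ) (p : ℝ × ℝ) : ℝ := fderiv ℝ f p (0, 1)

/-- `∂ₓ = (1, 0, f_x, g_x)`, the first tangent vector of the graph of `(f,g)`. -/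
def Dx (f g : ℝ × ℝ → ℝ) (p : ℝ × ℝ) : E4 :=
  EuclideanSpace.single 0 1 + px f p • EuclideanSpace.single 2 1
    + px g p • EuclideanSpace.single 3 1

/-- `∂_y = (0, 1, f_y, g_y)`, the second tangent vector of the graph of `(f,g)`. -/
def Dy (f g : ℝ × ℝ → ℝ) (p : ℝ × ℝ) : E4 :=
  EuclideanSpace.single 1 1 + py f p • EuclideanSpace.single 2 1
    + py g p • EuclideanSpace.single 3 1

/-- The first fundamental form `((E,F),(F,G))` of the graph of `(f,g)`. -/
def gmat (f g : ℝ × ℝ → ℝ) (p : ℝ × ℝ) : Matrix (Fin 2) (Fin 2) ℝ :=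
  !![1 + px f p ^ 2 + px g p ^ 2, px f p * py f p + px g p * py g p;
     px f p * py f p + px g p * py g p, 1 + py f p ^ 2 + py g p ^ 2]

/-- The plane `Π = ℝ² × {0}` in `ℝ⁴`. -/
def Pl12 : Submodule ℝ E4 :=
  Submodule.span ℝ {EuclideanSpace.single 0 1, EuclideanSpace.single 1 1}

/-! ### basic computations -/

lemma inner_DxDx (f g : ℝ × ℝ → ℝ) (p : ℝ × ℝ) :
    ⟪Dx f g p, Dx f g p⟫ = 1 + px f p ^ 2 + px g p ^ 2 := by
  simp only [Dx, inner_add_left, inner_add_right, real_inner_smul_left, real_inner_smul_right]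
  simp [Dx, inner_add_left, inner_add_right, real_inner_smul_left, real_inner_smul_right,
    EuclideanSpace.inner_single_left, EuclideanSpace.inner_single_right,
    EuclideanSpace.single_apply]
  ring

lemma inner_DxDy (f g : ℝ × ℝ → ℝ) (p : ℝ × ℝ) :
    ⟪Dx f g p, Dy f g p⟫ = px f p * py f p + px g p * py g p := by
  simp [Dx, Dy, inner_add_left, inner_add_right, real_inner_smul_left, real_inner_smul_right,
    EuclideanSpace.inner_single_left, EuclideanSpace.inner_single_right,
    EuclideanSpace.single_apply]
  ring

lemma inner_DyDy (f g : ℝ × ℝ → ℝ) (p : ℝ × ℝ) :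
    ⟪Dy f g p, Dy f g p⟫ = 1 + py f p ^ 2 + py g p ^ 2 := by
  simp only [Dy, inner_add_left, inner_add_right, real_inner_smul_left, real_inner_smul_right]
  simp [Dy, inner_add_left, inner_add_right, real_inner_smul_left, real_inner_smul_right,
    EuclideanSpace.inner_single_left, EuclideanSpace.inner_single_right,
    EuclideanSpace.single_apply]
  ring

lemma gmat_det (f g : ℝ × ℝ → ℝ) (p : ℝ × ℝ) :
    (gmat f g p).det = (1 + px f p ^ 2 + px g p ^ 2) * (1 + py f p ^ 2 + py g p ^ 2)
      - (px f p * py f p + px g p * py g p) * (px f p * py f p + px g p * py g p) := by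
  simp only [gmat, Matrix.det_fin_two_of]

lemma gmat_trace (f g : ℝ × ℝ → ℝ) (p : ℝ × ℝ) :
    (gmat f g p).trace = (1 + px f p ^ 2 + px g p ^ 2) + (1 + py f p ^ 2 + py g p ^ 2) := by
  simp only [gmat, Matrix.trace_fin_two_of]

lemma gmat_det_ge_one (f g : ℝ × ℝ → ℝ) (p : ℝ × ℝ) : 1 ≤ (gmat f g p).det := by
  rw [gmat_det]
  nlinarith [sq_nonneg (px f p * py g p - py f p * px g p), sq_nonneg (px f p),
    sq_nonneg (py f p), sq_nonneg (px g p), sq_nonneg (py g p)]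

/-! ### projections onto Pl12 -/

lemma mem_orth (c d : ℝ) :
    (c • EuclideanSpace.single 2 1 + d • EuclideanSpace.single 3 1 : E4) ∈ Pl12ᗮ := by
  rw [Submodule.mem_orthogonal]
  intro u hu
  rw [Pl12, Submodule.mem_span_pair] at hu
  obtain ⟨a, b, rfl⟩ := hu
  simp [inner_add_left, inner_add_right, real_inner_smul_left, real_inner_smul_right,
    EuclideanSpace.inner_single_left, EuclideanSpace.inner_single_right,
    EuclideanSpace.single_apply]

lemma proj_Dx (f g : ℝ × ℝ → ℝ) (p : ℝ × ℝ) :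
    (Submodule.orthogonalProjection Pl12 (Dx f g p) : E4) = EuclideanSpace.single 0 1 := by
  rw [Dx, add_assoc, map_add]
  rw [Submodule.orthogonalProjectionOnto_apply_of_mem_orthogonal (mem_orth _ _)]
  rw [add_zero]
  exact Submodule.starProjection_eq_self_iff.2 (Submodule.subset_span (by simp))

lemma proj_Dy (f g : ℝ × ℝ → ℝ) (p : ℝ × ℝ) :
    (Submodule.orthogonalProjection Pl12 (Dy f g p) : E4) = EuclideanSpace.single 1 1 := by
  rw [Dy, add_assoc, map_add]
  rw [Submodule.orthogonalProjectionOnto_apply_of_mem_orthogonal (mem_orth _ _)]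
  rw [add_zero]
  exact Submodule.starProjection_eq_self_iff.2 (Submodule.subset_span (by simp))

lemma inner_single00 : ⟪(EuclideanSpace.single 0 1 : E4), (EuclideanSpace.single 0 1 : E4)⟫ = 1 := by
  simp [EuclideanSpace.inner_single_left, EuclideanSpace.single_apply]

lemma inner_single01 : ⟪(EuclideanSpace.single 0 1 : E4), (EuclideanSpace.single 1 1 : E4)⟫ = 0 := by
  simp [EuclideanSpace.inner_single_left, EuclideanSpace.single_apply]

lemma inner_single11 : ⟪(EuclideanSpace.single 1 1 : E4), (EuclideanSpace.single 1 1 : E4)⟫ = 1 := by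
  simp [EuclideanSpace.inner_single_left, EuclideanSpace.single_apply]

/-! ### span of Dx, Dy -/

lemma linindep_DxDy (f g : ℝ × ℝ → ℝ) (p : ℝ × ℝ) :
    LinearIndependent ℝ ![Dx f g p, Dy f g p] := by
  rw [LinearIndependent.pair_iff]
  intro s t hst
  have e0 := congrArg (fun v : E4 => v 0) hst
  have e1 := congrArg (fun v : E4 => v 1) hst
  simp only [Dx, Dy, PiLp.add_apply, PiLp.smul_apply, PiLp.zero_apply,
    EuclideanSpace.single_apply, smul_eq_mul] at e0 e1
  simp at e0 e1
  exact ⟨e0, e1⟩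

lemma finrank_span_DxDy (f g : ℝ × ℝ → ℝ) (p : ℝ × ℝ) :
    Module.finrank ℝ ↥(Submodule.span ℝ {Dx f g p, Dy f g p}) = 2 := by
  have hr : Set.range ![Dx f g p, Dy f g p] = {Dx f g p, Dy f g p} := by
    simp [Matrix.range_cons, Matrix.range_empty, Set.pair_comm]
  rw [← hr, finrank_span_eq_card (linindep_DxDy f g p)]
  simp

lemma expansion (V : Submodule ℝ E4) (hV : Module.finrank ℝ V = 2) (w₁ w₂ : E4)
    (h1 : w₁ ∈ V) (h2 : w₂ ∈ V) (hn1 : ‖w₁‖ = 1) (hn2 : ‖w₂‖ = 1) (ho : ⟪w₁, w₂⟫ = 0) :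
    ∀ v ∈ V, v = ⟪v, w₁⟫ • w₁ + ⟪v, w₂⟫ • w₂ := by
  have ho' : ⟪w₂, w₁⟫ = 0 := by rw [real_inner_comm]; exact ho
  have hs1 : ⟪w₁, w₁⟫ = 1 := by rw [real_inner_self_eq_norm_sq, hn1]; norm_num
  have hs2 : ⟪w₂, w₂⟫ = 1 := by rw [real_inner_self_eq_norm_sq, hn2]; norm_num
  have hli : LinearIndependent ℝ ![w₁, w₂] := by
    rw [LinearIndependent.pair_iff]
    intro s t hst
    have e1 := congrArg (fun v => (⟪w₁, v⟫ : ℝ)) hst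
    have e2 := congrArg (fun v => (⟪w₂, v⟫ : ℝ)) hst
    simp only [inner_add_right, real_inner_smul_right, inner_zero_right, hs1, hs2, ho, ho',
      mul_one, mul_zero, add_zero, zero_add] at e1 e2
    exact ⟨e1, e2⟩
  have hsp : Submodule.span ℝ {w₁, w₂} = V := by
    apply Submodule.eq_of_le_of_finrank_le
    · rw [Submodule.span_le]; intro z hz
      rcases hz with rfl | hz
      · exact h1
      · rcases hz with rfl; exact h2
    · rw [hV]
      have hr : Set.range ![w₁, w₂] = {w₁, w₂} := by
        simp [Matrix.range_cons, Matrix.range_empty, Set.pair_comm]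
      rw [← hr, finrank_span_eq_card hli]
      simp
  intro v hv
  rw [← hsp, Submodule.mem_span_pair] at hv
  obtain ⟨a, b, rfl⟩ := hv
  have i1 : (⟪a • w₁ + b • w₂, w₁⟫ : ℝ) = a := by
    rw [inner_add_left, real_inner_smul_left, real_inner_smul_left, hs1, ho']; ring
  have i2 : (⟪a • w₁ + b • w₂, w₂⟫ : ℝ) = b := by
    rw [inner_add_left, real_inner_smul_left, real_inner_smul_left, hs2, ho]; ring
  rw [i1, i2]

/-! ### the symmetric operator and its spectrum -/

lemma inner_proj_of_mem (V : Submodule ℝ E4) {u : E4} (hu : u ∈ V) (z : E4) :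
    ⟪u, (Submodule.orthogonalProjection V z : E4)⟫ = ⟪u, z⟫ := by
  exact Submodule.inner_orthogonalProjectionOnto_eq_of_mem_left ⟨u, hu⟩ z

def TSV (V : Submodule ℝ E4) : ↥V →ₗ[ℝ] ↥V :=
  ((Submodule.orthogonalProjection V).toLinearMap.comp
    (Pl12.subtype.comp (Submodule.orthogonalProjection Pl12).toLinearMap)).comp V.subtype

lemma TSV_inner (V : Submodule ℝ E4) (x y : ↥V) :
    ⟪((TSV V x : ↥V) : E4), (y : E4)⟫
      = ⟪(Submodule.orthogonalProjection Pl12 (x : E4) : E4),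
          (Submodule.orthogonalProjection Pl12 (y : E4) : E4)⟫ := by
  rw [show ((TSV V x : ↥V) : E4)
      = (Submodule.orthogonalProjection V ((Submodule.orthogonalProjection Pl12 (x : E4) : E4)) : E4) from rfl]
  rw [real_inner_comm, inner_proj_of_mem V y.2, real_inner_comm,
    ← inner_proj_of_mem Pl12 (SetLike.coe_mem _) (y : E4)]

lemma TSV_symm (V : Submodule ℝ E4) : (TSV V).IsSymmetric := by
  intro x y
  rw [Submodule.coe_inner, Submodule.coe_inner, TSV_inner,
    real_inner_comm (((TSV V y : ↥V) : E4)) ((x : E4)), TSV_inner]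
  exact real_inner_comm _ _

lemma exists_eigen (V : Submodule ℝ E4) (hn : Module.finrank ℝ ↥V = 2) :
    ∃ (w₁ w₂ : E4) (μ0 μ1 : ℝ), w₁ ∈ V ∧ w₂ ∈ V ∧ ‖w₁‖ = 1 ∧ ‖w₂‖ = 1 ∧ ⟪w₁, w₂⟫ = 0 ∧
      0 ≤ μ0 ∧ μ0 ≤ 1 ∧ 0 ≤ μ1 ∧ μ1 ≤ 1 ∧
      ∀ v ∈ V, ‖(Submodule.orthogonalProjection Pl12 v : E4)‖ ^ 2
        = μ0 * ⟪v, w₁⟫ ^ 2 + μ1 * ⟪v, w₂⟫ ^ 2 := by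
  set b := (TSV_symm V).eigenvectorBasis hn with hb
  set μ := (TSV_symm V).eigenvalues hn with hμ
  have hq : ∀ i j, ⟪(Submodule.orthogonalProjection Pl12 ((b i : ↥V) : E4) : E4),
      (Submodule.orthogonalProjection Pl12 ((b j : ↥V) : E4) : E4)⟫
        = μ i * ⟪((b i : ↥V) : E4), ((b j : ↥V) : E4)⟫ := by
    intro i j
    rw [← TSV_inner, (TSV_symm V).apply_eigenvectorBasis hn i]
    rw [Submodule.coe_smul, real_inner_smul_left]
    norm_num [hμ, hb]
  have hnorm : ∀ i, ‖((b i : ↥V) : E4)‖ = 1 := fun i => b.orthonormal.1 i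
  have ho : ⟪((b 0 : ↥V) : E4), ((b 1 : ↥V) : E4)⟫ = 0 := by
    have := b.orthonormal.2 (show (0 : Fin 2) ≠ 1 by decide)
    exact this
  have ho' : ⟪((b 1 : ↥V) : E4), ((b 0 : ↥V) : E4)⟫ = 0 := by
    rw [real_inner_comm]; exact ho
  have hs : ∀ i, ⟪((b i : ↥V) : E4), ((b i : ↥V) : E4)⟫ = 1 := by
    intro i; rw [real_inner_self_eq_norm_sq, hnorm]; norm_num
  -- the quadratic form expansion
  have hexp : ∀ v ∈ V, ‖(Submodule.orthogonalProjection Pl12 v : E4)‖ ^ 2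
      = μ 0 * ⟪v, ((b 0 : ↥V) : E4)⟫ ^ 2 + μ 1 * ⟪v, ((b 1 : ↥V) : E4)⟫ ^ 2 := by
    intro v hv
    have hvex := expansion V hn _ _ (SetLike.coe_mem (b 0)) (SetLike.coe_mem (b 1))
      (hnorm 0) (hnorm 1) ho v hv
    set s : ℝ := ⟪v, ((b 0 : ↥V) : E4)⟫
    set t : ℝ := ⟪v, ((b 1 : ↥V) : E4)⟫
    have hproj : (Submodule.orthogonalProjection Pl12 v : E4)
        = s • (Submodule.orthogonalProjection Pl12 ((b 0 : ↥V) : E4) : E4)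
          + t • (Submodule.orthogonalProjection Pl12 ((b 1 : ↥V) : E4) : E4) := by
      conv_lhs => rw [hvex]
      rw [map_add, map_smul, map_smul]
      push_cast
      rfl
    rw [← real_inner_self_eq_norm_sq, hproj]
    rw [inner_add_left, inner_add_right, inner_add_right, real_inner_smul_left,
      real_inner_smul_left, real_inner_smul_left, real_inner_smul_left,
      real_inner_smul_right, real_inner_smul_right, real_inner_smul_right,
      real_inner_smul_right]
    rw [hq 0 0, hq 0 1, hq 1 1, ho, hs 0, hs 1]
    have h10 : ⟪(Submodule.orthogonalProjection Pl12 ((b 1 : ↥V) : E4) : E4),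
        (Submodule.orthogonalProjection Pl12 ((b 0 : ↥V) : E4) : E4)⟫ = 0 := by
      rw [hq 1 0, ho']; ring
    rw [h10]
    ring
  -- bounds on eigenvalues
  have hbound : ∀ i, 0 ≤ μ i ∧ μ i ≤ 1 := by
    intro i
    have h1 : ‖(Submodule.orthogonalProjection Pl12 ((b i : ↥V) : E4) : E4)‖ ^ 2 = μ i := by
      rw [← real_inner_self_eq_norm_sq, hq i i, hs i]; ring
    constructor
    · rw [← h1]; positivity
    · rw [← h1]
      have hle : ‖(Submodule.orthogonalProjection Pl12 ((b i : ↥V) : E4) : E4)‖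
          ≤ ‖((b i : ↥V) : E4)‖ := by
        have h2 := (Submodule.orthogonalProjection Pl12).le_opNorm ((b i : ↥V) : E4)
        have h3 := Submodule.orthogonalProjection_norm_le Pl12
        calc ‖(Submodule.orthogonalProjection Pl12 ((b i : ↥V) : E4) : E4)‖
            = ‖Submodule.orthogonalProjection Pl12 ((b i : ↥V) : E4)‖ := rfl
          _ ≤ ‖Submodule.orthogonalProjection Pl12‖ * ‖((b i : ↥V) : E4)‖ := h2
          _ ≤ 1 * ‖((b i : ↥V) : E4)‖ := by
              apply mul_le_mul_of_nonneg_right h3 (norm_nonneg _)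
          _ = ‖((b i : ↥V) : E4)‖ := one_mul _
      calc ‖(Submodule.orthogonalProjection Pl12 ((b i : ↥V) : E4) : E4)‖ ^ 2
          ≤ ‖((b i : ↥V) : E4)‖ ^ 2 := by
            apply pow_le_pow_left₀ (norm_nonneg _) hle
        _ = 1 := by rw [hnorm]; norm_num
  exact ⟨_, _, μ 0, μ 1, SetLike.coe_mem (b 0), SetLike.coe_mem (b 1), hnorm 0, hnorm 1, ho,
    (hbound 0).1, (hbound 0).2, (hbound 1).1, (hbound 1).2, hexp⟩

/-! ### scalar algebra -/

lemma key_scalar (μ0 μ1 x0 x1 y0 y1 : ℝ)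
    (hA : μ0*x0^2 + μ1*x1^2 = 1) (hB : μ0*y0^2 + μ1*y1^2 = 1) (hC : μ0*(x0*y0) + μ1*(x1*y1) = 0)
    (hd : (x0^2+x1^2)*(y0^2+y1^2) - (x0*y0+x1*y1)^2 ≠ 0) :
    (μ0+μ1)*((x0^2+x1^2)*(y0^2+y1^2) - (x0*y0+x1*y1)^2) = (x0^2+x1^2) + (y0^2+y1^2) ∧
    μ0*μ1*((x0^2+x1^2)*(y0^2+y1^2) - (x0*y0+x1*y1)^2) = 1 := by
  have c1 : μ0*(x0*y1-x1*y0)^2 = x1^2+y1^2 := by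
    linear_combination y1^2*hA + x1^2*hB - 2*x1*y1*hC
  have c2 : μ1*(x0*y1-x1*y0)^2 = x0^2+y0^2 := by
    linear_combination y0^2*hA + x0^2*hB - 2*x0*y0*hC
  have c3 : x0*x1 + y0*y1 = 0 := by
    linear_combination -(y0*y1)*hA - x0*x1*hB + (x0*y1+x1*y0)*hC
  have hd2 : (x0*y1-x1*y0)^2 ≠ 0 := by
    intro h; apply hd; linear_combination h
  refine ⟨by linear_combination c1 + c2, ?_⟩
  have c4 : (μ0*μ1*(x0*y1-x1*y0)^2) * (x0*y1-x1*y0)^2 = 1 * (x0*y1-x1*y0)^2 := by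
    linear_combination (μ1*(x0*y1-x1*y0)^2)*c1 + (x1^2+y1^2)*c2 + (x0*x1+y0*y1)*c3
  have := mul_right_cancel₀ hd2 c4
  linear_combination this

lemma charpoly_fin2 (M : Matrix (Fin 2) (Fin 2) ℝ) :
    M.charpoly = X^2 - C (M.trace) * X + C (M.det) := by
  rw [Matrix.charpoly, Matrix.det_fin_two]
  have h01 : M.charmatrix 0 1 = - C (M 0 1) := Matrix.charmatrix_apply_ne _ _ _ (by decide)
  have h10 : M.charmatrix 1 0 = - C (M 1 0) := Matrix.charmatrix_apply_ne _ _ _ (by decide)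
  simp only [Matrix.charmatrix_apply_eq, h01, h10,
    Matrix.trace_fin_two, Matrix.det_fin_two, map_add, map_mul, map_sub, map_neg]
  ring

lemma charpoly_trace_det (M : Matrix (Fin 2) (Fin 2) ℝ) (a b : ℝ)
    (h : M.charpoly = (X - C a) * (X - C b)) : M.trace = a + b ∧ M.det = a * b := by
  rw [charpoly_fin2] at h
  have h1 := congrArg (fun q => Polynomial.coeff q 1) h
  have h0 := congrArg (fun q => Polynomial.coeff q 0) h
  simp only [mul_comm, sub_mul, mul_sub, Polynomial.coeff_add, Polynomial.coeff_sub,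
    Polynomial.coeff_X_pow, Polynomial.coeff_C_mul, Polynomial.coeff_X, Polynomial.coeff_C,
    Polynomial.coeff_mul_C, Polynomial.coeff_X_mul, Polynomial.mul_coeff_zero,
    Polynomial.coeff_zero] at h1 h0
  norm_num at h1 h0
  exact ⟨by linarith [h1], by linarith [h0]⟩

lemma charpoly_of_trace_det (M : Matrix (Fin 2) (Fin 2) ℝ) (a b : ℝ)
    (ht : M.trace = a + b) (hd : M.det = a * b) :
    M.charpoly = (X - C a) * (X - C b) := by
  rw [charpoly_fin2, ht, hd]
  simp only [map_add, map_mul]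
  ring

/-! ### the key system -/

lemma system (f g : ℝ × ℝ → ℝ) (p : ℝ × ℝ) (w₁ w₂ : E4) (μ0 μ1 : ℝ)
    (hw₁ : w₁ ∈ Submodule.span ℝ {Dx f g p, Dy f g p})
    (hw₂ : w₂ ∈ Submodule.span ℝ {Dx f g p, Dy f g p})
    (hn1 : ‖w₁‖ = 1) (hn2 : ‖w₂‖ = 1) (ho : ⟪w₁, w₂⟫ = 0)
    (hq : ∀ v ∈ Submodule.span ℝ {Dx f g p, Dy f g p},
      ‖(Submodule.orthogonalProjection Pl12 v : E4)‖ ^ 2 = μ0 * ⟪v, w₁⟫ ^ 2 + μ1 * ⟪v, w₂⟫ ^ 2) :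
    (μ0+μ1) * (gmat f g p).det = (gmat f g p).trace ∧ μ0*μ1*(gmat f g p).det = 1 := by
  set V := Submodule.span ℝ {Dx f g p, Dy f g p} with hV
  have hmemx : Dx f g p ∈ V := Submodule.subset_span (by simp)
  have hmemy : Dy f g p ∈ V := Submodule.subset_span (by simp)
  have hfr : Module.finrank ℝ ↥V = 2 := finrank_span_DxDy f g p
  have ho' : ⟪w₂, w₁⟫ = 0 := by rw [real_inner_comm]; exact ho
  have hs1 : ⟪w₁, w₁⟫ = 1 := by rw [real_inner_self_eq_norm_sq, hn1]; norm_num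
  have hs2 : ⟪w₂, w₂⟫ = 1 := by rw [real_inner_self_eq_norm_sq, hn2]; norm_num
  have hcomb : ∀ a b c d : ℝ, (⟪a • w₁ + b • w₂, c • w₁ + d • w₂⟫ : ℝ) = a*c + b*d := by
    intro a b c d
    simp only [inner_add_left, inner_add_right, real_inner_smul_left, real_inner_smul_right,
      hs1, hs2, ho, ho']
    ring
  set x0 : ℝ := ⟪Dx f g p, w₁⟫ with hx0
  set x1 : ℝ := ⟪Dx f g p, w₂⟫ with hx1
  set y0 : ℝ := ⟪Dy f g p, w₁⟫ with hy0
  set y1 : ℝ := ⟪Dy f g p, w₂⟫ with hy1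
  have hDxe : Dx f g p = x0 • w₁ + x1 • w₂ :=
    expansion V hfr w₁ w₂ hw₁ hw₂ hn1 hn2 ho _ hmemx
  have hDye : Dy f g p = y0 • w₁ + y1 • w₂ :=
    expansion V hfr w₁ w₂ hw₁ hw₂ hn1 hn2 ho _ hmemy
  -- Gram identities
  have hE : x0*x0 + x1*x1 = 1 + px f p ^ 2 + px g p ^ 2 := by
    rw [← hcomb x0 x1 x0 x1, ← hDxe, inner_DxDx]
  have hF : x0*y0 + x1*y1 = px f p * py f p + px g p * py g p := by
    rw [← hcomb x0 x1 y0 y1, ← hDxe, ← hDye, inner_DxDy]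
  have hG : y0*y0 + y1*y1 = 1 + py f p ^ 2 + py g p ^ 2 := by
    rw [← hcomb y0 y1 y0 y1, ← hDye, inner_DyDy]
  -- quadratic form values
  have hA : μ0 * x0^2 + μ1 * x1^2 = 1 := by
    have := hq _ hmemx
    rw [proj_Dx, ← real_inner_self_eq_norm_sq, inner_single00] at this
    linarith [this]
  have hB : μ0 * y0^2 + μ1 * y1^2 = 1 := by
    have := hq _ hmemy
    rw [proj_Dy, ← real_inner_self_eq_norm_sq, inner_single11] at this
    linarith [this]
  have hD : μ0 * (x0+y0)^2 + μ1 * (x1+y1)^2 = 2 := by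
    have hm : Dx f g p + Dy f g p ∈ V := Submodule.add_mem _ hmemx hmemy
    have := hq _ hm
    have hpr : (Submodule.orthogonalProjection Pl12 (Dx f g p + Dy f g p) : E4)
        = EuclideanSpace.single 0 1 + EuclideanSpace.single 1 1 := by
      rw [map_add]
      push_cast
      rw [proj_Dx, proj_Dy]
    rw [hpr, ← real_inner_self_eq_norm_sq] at this
    rw [inner_add_left, inner_add_right, inner_add_right, inner_single00, inner_single11,
      inner_single01, real_inner_comm (EuclideanSpace.single 0 1 : E4), inner_single01]
      at this
    rw [inner_add_left, inner_add_left, ← hx0, ← hy0, ← hx1, ← hy1] at this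
    linarith [this]
  have hC : μ0*(x0*y0) + μ1*(x1*y1) = 0 := by linear_combination (hD - hA - hB)/2
  -- determinant is nonzero
  have hdet : (gmat f g p).det = (x0^2+x1^2)*(y0^2+y1^2) - (x0*y0+x1*y1)^2 := by
    rw [gmat_det, ← hE, ← hF, ← hG]; ring
  have hdne : (x0^2+x1^2)*(y0^2+y1^2) - (x0*y0+x1*y1)^2 ≠ 0 := by
    rw [← hdet]
    have := gmat_det_ge_one f g p
    linarith
  obtain ⟨k1, k2⟩ := key_scalar μ0 μ1 x0 x1 y0 y1 hA hB hC hdne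
  constructor
  · rw [hdet, gmat_trace, ← hE, ← hG, k1]; ring
  · rw [hdet, k2]

lemma inv_entries (M : Matrix (Fin 2) (Fin 2) ℝ) (A B D : ℝ) (hM : M = !![A, B; B, D]) :
    M⁻¹ 0 0 = M.det⁻¹ * D ∧ M⁻¹ 0 1 = M.det⁻¹ * (-B) ∧ M⁻¹ 1 0 = M.det⁻¹ * (-B)
      ∧ M⁻¹ 1 1 = M.det⁻¹ * A := by
  subst hM
  rw [Matrix.inv_def, Matrix.adjugate_fin_two]
  refine ⟨?_, ?_, ?_, ?_⟩ <;> simp [Ring.inverse_eq_inv', Matrix.det_fin_two_of]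

lemma part1 (f g : ℝ × ℝ → ℝ) (p : ℝ × ℝ) :
    ⟪(gmat f g p)⁻¹ 0 0 • Dx f g p + (gmat f g p)⁻¹ 0 1 • Dy f g p, Dx f g p⟫ =
        ⟪(Submodule.orthogonalProjection Pl12 (Dx f g p) : E4),
          (Submodule.orthogonalProjection Pl12 (Dx f g p) : E4)⟫ ∧
    ⟪(gmat f g p)⁻¹ 0 0 • Dx f g p + (gmat f g p)⁻¹ 0 1 • Dy f g p, Dy f g p⟫ =
        ⟪(Submodule.orthogonalProjection Pl12 (Dx f g p) : E4),
          (Submodule.orthogonalProjection Pl12 (Dy f g p) : E4)⟫ ∧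
    ⟪(gmat f g p)⁻¹ 1 0 • Dx f g p + (gmat f g p)⁻¹ 1 1 • Dy f g p, Dx f g p⟫ =
        ⟪(Submodule.orthogonalProjection Pl12 (Dy f g p) : E4),
          (Submodule.orthogonalProjection Pl12 (Dx f g p) : E4)⟫ ∧
    ⟪(gmat f g p)⁻¹ 1 0 • Dx f g p + (gmat f g p)⁻¹ 1 1 • Dy f g p, Dy f g p⟫ =
        ⟪(Submodule.orthogonalProjection Pl12 (Dy f g p) : E4),
          (Submodule.orthogonalProjection Pl12 (Dy f g p) : E4)⟫ := by
  have hd1 : 1 ≤ (gmat f g p).det := gmat_det_ge_one f g p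
  set Ev : ℝ := 1 + px f p ^ 2 + px g p ^ 2 with hEv
  set Fv : ℝ := px f p * py f p + px g p * py g p with hFv
  set Gv : ℝ := 1 + py f p ^ 2 + py g p ^ 2 with hGv
  have hdet : (gmat f g p).det = Ev * Gv - Fv * Fv := gmat_det f g p
  have hdne : Ev * Gv - Fv * Fv ≠ 0 := by rw [← hdet]; linarith
  obtain ⟨h00, h01, h10, h11⟩ := inv_entries (gmat f g p) Ev Fv Gv (by rw [gmat])
  have hyx : ⟪Dy f g p, Dx f g p⟫ = Fv := by
    rw [real_inner_comm]; exact inner_DxDy f g p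
  refine ⟨?_, ?_, ?_, ?_⟩
  · rw [proj_Dx, inner_single00, inner_add_left, real_inner_smul_left, real_inner_smul_left,
      inner_DxDx f g p, hyx, h00, h01, hdet, ← hEv]
    have hdne2 : Ev * Gv - Fv ^ 2 ≠ 0 := by rwa [sq]
    have hdne3 : -Fv ^ 2 + Ev * Gv ≠ 0 := by intro h; apply hdne; linear_combination h
    field_simp
    ring
  · rw [proj_Dx, proj_Dy, inner_single01, inner_add_left, real_inner_smul_left,
      real_inner_smul_left, inner_DxDy f g p, inner_DyDy f g p, h00, h01, hdet, ← hFv, ← hGv]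
    field_simp
    ring
  · rw [proj_Dx, proj_Dy, real_inner_comm (EuclideanSpace.single 0 1 : E4) (EuclideanSpace.single 1 1 : E4), inner_single01,
      inner_add_left, real_inner_smul_left, real_inner_smul_left, inner_DxDx f g p, hyx,
      h10, h11, hdet, ← hEv]
    field_simp
    ring
  · rw [proj_Dy, inner_single11, inner_add_left, real_inner_smul_left, real_inner_smul_left,
      inner_DxDy f g p, inner_DyDy f g p, h10, h11, hdet, ← hFv, ← hGv]
    have hdne2 : Ev * Gv - Fv ^ 2 ≠ 0 := by rwa [sq]
    have hdne3 : -Fv ^ 2 + Ev * Gv ≠ 0 := by intro h; apply hdne; linear_combination h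
    field_simp
    ring

/-- For the graph surface `Σ : (x,y) ↦ (x, y, f(x,y), g(x,y))`, the symmetric operator
`S_{Π W}` of the tangent plane `W = span(∂ₓ, ∂_y)` with respect to `Π = ℝ²×{0}` — which is
characterized by `⟨S v, v'⟩ = ⟨p_Π v, p_Π v'⟩` — has matrix, in the basis `(∂ₓ, ∂_y)`,
equal to the inverse of the metric matrix `((E,F),(F,G))`.  Consequently `Σ` has constant
principal angles with respect to `Π` iff `((E,F),(F,G))` has constant eigenvalues. -/
theorem graph_SWV_eq_inverse_metric_and_constant_angles_iff
    (f g : ℝ × ℝ → ℝ) (Ω : Set (ℝ × ℝ)) (hΩ : IsOpen Ω)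
    (hf : ContDiffOn ℝ (⊤ : ℕ∞) f Ω) (hg : ContDiffOn ℝ (⊤ : ℕ∞) g Ω) :
    (∀ p ∈ Ω,
      let Minv := (gmat f g p)⁻¹
      let Sx : E4 := Minv 0 0 • Dx f g p + Minv 0 1 • Dy f g p
      let Sy : E4 := Minv 1 0 • Dx f g p + Minv 1 1 • Dy f g p
      ⟪Sx, Dx f g p⟫ =
          ⟪(Submodule.orthogonalProjection Pl12 (Dx f g p) : E4),
            (Submodule.orthogonalProjection Pl12 (Dx f g p) : E4)⟫ ∧
      ⟪Sx, Dy f g p⟫ =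
          ⟪(Submodule.orthogonalProjection Pl12 (Dx f g p) : E4),
            (Submodule.orthogonalProjection Pl12 (Dy f g p) : E4)⟫ ∧
      ⟪Sy, Dx f g p⟫ =
          ⟪(Submodule.orthogonalProjection Pl12 (Dy f g p) : E4),
            (Submodule.orthogonalProjection Pl12 (Dx f g p) : E4)⟫ ∧
      ⟪Sy, Dy f g p⟫ =
          ⟪(Submodule.orthogonalProjection Pl12 (Dy f g p) : E4),
            (Submodule.orthogonalProjection Pl12 (Dy f g p) : E4)⟫) ∧
    ((∃ θ₁ θ₂ : ℝ, ∀ p ∈ Ω,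
        IsPrincipalAngles (Submodule.span ℝ {Dx f g p, Dy f g p}) Pl12 θ₁ θ₂) ↔
      (∃ a b : ℝ, ∀ p ∈ Ω,
        (gmat f g p).charpoly = (X - C a) * (X - C b))) := by
  constructor
  · intro p _hp
    exact part1 f g p
  constructor
  · -- forward direction
    rintro ⟨θ₁, θ₂, hall⟩
    rcases Ω.eq_empty_or_nonempty with hemp | ⟨p₀, hp₀⟩
    · exact ⟨0, 0, fun p hp => absurd hp (by simp [hemp])⟩
    set c₁ : ℝ := Real.cos θ₁ ^ 2 with hc₁
    set c₂ : ℝ := Real.cos θ₂ ^ 2 with hc₂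
    have hsys : ∀ p ∈ Ω, (c₁ + c₂) * (gmat f g p).det = (gmat f g p).trace ∧
        c₁ * c₂ * (gmat f g p).det = 1 := by
      intro p hp
      obtain ⟨_, _, _, v₁, v₂, hv₁, hv₂, hn1, hn2, ho, hq⟩ := hall p hp
      exact system f g p v₁ v₂ c₁ c₂ hv₁ hv₂ hn1 hn2 ho hq
    have hcc : c₁ * c₂ ≠ 0 := by
      obtain ⟨_, k2⟩ := hsys p₀ hp₀
      intro h
      rw [h] at k2
      norm_num at k2
    have hc1 : c₁ ≠ 0 := fun h => hcc (by rw [h]; ring)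
    have hc2 : c₂ ≠ 0 := fun h => hcc (by rw [h]; ring)
    refine ⟨c₁⁻¹, c₂⁻¹, fun p hp => ?_⟩
    obtain ⟨k1, k2⟩ := hsys p hp
    have hthis : (gmat f g p).trace * (c₁*c₂) = c₁ + c₂ := by
      linear_combination (-(c₁*c₂))*k1 + (c₁+c₂)*k2
    apply charpoly_of_trace_det
    · calc (gmat f g p).trace = (gmat f g p).trace * (c₁*c₂) * (c₁*c₂)⁻¹ := by
            field_simp
        _ = (c₁+c₂) * (c₁*c₂)⁻¹ := by rw [hthis]
        _ = c₁⁻¹ + c₂⁻¹ := by field_simp; ring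
    · have h6 : (c₁*c₂) * (gmat f g p).det = 1 := by linear_combination k2
      field_simp
      linear_combination k2
  · -- backward direction
    rintro ⟨a, b, hall⟩
    rcases Ω.eq_empty_or_nonempty with hemp | ⟨p₀, hp₀⟩
    · exact ⟨0, 0, fun p hp => absurd hp (by simp [hemp])⟩
    have htd : ∀ p ∈ Ω, (gmat f g p).trace = a + b ∧ (gmat f g p).det = a * b :=
      fun p hp => charpoly_trace_det _ a b (hall p hp)
    -- eigen data at each point, with the two scalar equations
    have heig : ∀ p ∈ Ω, ∃ (w₁ w₂ : E4) (μ0 μ1 : ℝ),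
        w₁ ∈ Submodule.span ℝ {Dx f g p, Dy f g p} ∧
        w₂ ∈ Submodule.span ℝ {Dx f g p, Dy f g p} ∧
        ‖w₁‖ = 1 ∧ ‖w₂‖ = 1 ∧ ⟪w₁, w₂⟫ = 0 ∧
        0 ≤ μ0 ∧ μ0 ≤ 1 ∧ 0 ≤ μ1 ∧ μ1 ≤ 1 ∧
        (∀ v ∈ Submodule.span ℝ {Dx f g p, Dy f g p},
          ‖(Submodule.orthogonalProjection Pl12 v : E4)‖ ^ 2 = μ0 * ⟪v, w₁⟫ ^ 2 + μ1 * ⟪v, w₂⟫ ^ 2) ∧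
        (μ0 + μ1) * (a * b) = a + b ∧ μ0 * μ1 * (a * b) = 1 := by
      intro p hp
      obtain ⟨ht, hd⟩ := htd p hp
      obtain ⟨w₁, w₂, μ0, μ1, hw₁, hw₂, hn1, hn2, ho, hb00, hb01, hb10, hb11, hexp⟩ :=
        exists_eigen (Submodule.span ℝ {Dx f g p, Dy f g p}) (finrank_span_DxDy f g p)
      obtain ⟨k1, k2⟩ := system f g p w₁ w₂ μ0 μ1 hw₁ hw₂ hn1 hn2 ho hexp
      rw [hd, ht] at k1
      rw [hd] at k2
      exact ⟨w₁, w₂, μ0, μ1, hw₁, hw₂, hn1, hn2, ho, hb00, hb01, hb10, hb11, hexp, k1, k2⟩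
    -- at the base point: 1/a and 1/b lie in (0,1]
    have hroots : (0 < a⁻¹ ∧ a⁻¹ ≤ 1) ∧ (0 < b⁻¹ ∧ b⁻¹ ≤ 1) := by
      obtain ⟨w₁, w₂, μ0, μ1, _, _, _, _, _, hb00, hb01, hb10, hb11, _, k1, k2⟩ := heig p₀ hp₀
      have hab : a * b ≠ 0 := by intro h; rw [h] at k2; norm_num at k2
      have ha : a ≠ 0 := fun h => hab (by rw [h]; ring)
      have hb : b ≠ 0 := fun h => hab (by rw [h]; ring)
      constructor
      · have hfac : (1 - μ0*a) * (1 - μ1*a) * b = 0 := by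
          linear_combination (-1 : ℝ)*k1 + a*k2
        have h2 := (mul_eq_zero.1 hfac).resolve_right hb
        rcases mul_eq_zero.1 h2 with h3 | h3
        · have : a⁻¹ = μ0 := by field_simp; linarith
          rw [this]
          refine ⟨lt_of_le_of_ne hb00 ?_, hb01⟩
          intro h4
          rw [← h4] at h3
          norm_num at h3
        · have : a⁻¹ = μ1 := by field_simp; linarith
          rw [this]
          refine ⟨lt_of_le_of_ne hb10 ?_, hb11⟩
          intro h4
          rw [← h4] at h3
          norm_num at h3
      · have hfac : (1 - μ0*b) * (1 - μ1*b) * a = 0 := by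
          linear_combination (-1 : ℝ)*k1 + b*k2
        have h2 := (mul_eq_zero.1 hfac).resolve_right ha
        rcases mul_eq_zero.1 h2 with h3 | h3
        · have : b⁻¹ = μ0 := by field_simp; linarith
          rw [this]
          refine ⟨lt_of_le_of_ne hb00 ?_, hb01⟩
          intro h4
          rw [← h4] at h3
          norm_num at h3
        · have : b⁻¹ = μ1 := by field_simp; linarith
          rw [this]
          refine ⟨lt_of_le_of_ne hb10 ?_, hb11⟩
          intro h4
          rw [← h4] at h3
          norm_num at h3
    have ha : a ≠ 0 := by
      intro h; rw [h] at hroots; simp at hroots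
    have hb : b ≠ 0 := by
      intro h; rw [h] at hroots; simp at hroots
    set c₁ : ℝ := max a⁻¹ b⁻¹ with hc₁
    set c₂ : ℝ := min a⁻¹ b⁻¹ with hc₂
    have hc₁pos : 0 < c₁ := lt_max_of_lt_left hroots.1.1
    have hc₂pos : 0 < c₂ := lt_min hroots.1.1 hroots.2.1
    have hc₁le : c₁ ≤ 1 := max_le hroots.1.2 hroots.2.2
    have hc₂le : c₂ ≤ 1 := le_trans (min_le_left _ _) hroots.1.2
    have hc₂c₁ : c₂ ≤ c₁ := min_le_max
    have hsum : c₁ + c₂ = a⁻¹ + b⁻¹ := by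
      rcases le_total a⁻¹ b⁻¹ with h | h <;>
        simp [hc₁, hc₂, max_eq_right, max_eq_left, min_eq_left, min_eq_right, h] <;> ring
    have hprod : c₁ * c₂ = a⁻¹ * b⁻¹ := by
      rcases le_total a⁻¹ b⁻¹ with h | h <;>
        simp [hc₁, hc₂, max_eq_right, max_eq_left, min_eq_left, min_eq_right, h] <;> ring
    refine ⟨Real.arccos (Real.sqrt c₁), Real.arccos (Real.sqrt c₂), fun p hp => ?_⟩
    have hcos1 : Real.cos (Real.arccos (Real.sqrt c₁)) ^ 2 = c₁ := by
      rw [Real.cos_arccos (by linarith [Real.sqrt_nonneg c₁]) (Real.sqrt_le_one.2 hc₁le)]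
      exact Real.sq_sqrt hc₁pos.le
    have hcos2 : Real.cos (Real.arccos (Real.sqrt c₂)) ^ 2 = c₂ := by
      rw [Real.cos_arccos (by linarith [Real.sqrt_nonneg c₂]) (Real.sqrt_le_one.2 hc₂le)]
      exact Real.sq_sqrt hc₂pos.le
    refine ⟨Real.arccos_nonneg _, ?_, Real.arccos_le_pi_div_two.2 (Real.sqrt_nonneg _), ?_⟩
    · -- θ₁ ≤ θ₂ since arccos is antitone
      rw [Real.arccos, Real.arccos]
      have := Real.monotone_arcsin (Real.sqrt_le_sqrt hc₂c₁)
      linarith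
    obtain ⟨w₁, w₂, μ0, μ1, hw₁, hw₂, hn1, hn2, ho, _, _, _, _, hexp, k1, k2⟩ := heig p hp
    have hab : a * b ≠ 0 := mul_ne_zero ha hb
    have h5 : (a⁻¹ + b⁻¹) * (a*b) = a + b := by field_simp; ring
    have h6 : (a⁻¹ * b⁻¹) * (a*b) = 1 := by field_simp
    have hμsum : μ0 + μ1 = c₁ + c₂ := by
      rw [hsum]; exact mul_right_cancel₀ hab (k1.trans h5.symm)
    have hμprod : μ0 * μ1 = c₁ * c₂ := by
      rw [hprod]; exact mul_right_cancel₀ hab (k2.trans h6.symm)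
    have hpair : (μ0 - c₁) * (μ0 - c₂) = 0 := by
      linear_combination μ0*hμsum - hμprod
    rcases mul_eq_zero.1 hpair with h3 | h3
    · have hμ0 : μ0 = c₁ := by linarith
      have hμ1 : μ1 = c₂ := by linarith
      refine ⟨w₁, w₂, hw₁, hw₂, hn1, hn2, ho, fun v hv => ?_⟩
      rw [hcos1, hcos2, hexp v hv, hμ0, hμ1]
    · have hμ0 : μ0 = c₂ := by linarith
      have hμ1 : μ1 = c₁ := by linarith
      refine ⟨w₂, w₁, hw₂, hw₁, hn2, hn1, by rw [real_inner_comm]; exact ho, fun v hv => ?_⟩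
      rw [hcos1, hcos2, hexp v hv, hμ0, hμ1]
      ring
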